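/- arXiv:2112.12019 — 4 statements merged into one kernel-verified Lean document; each statement's English description precedes it below -/
import Mathlib

section
/- If s is a nonempty list of natural numbers with C(s) ≥ 1, then s has a nonempty prefix that is a well-formed expression. -/
/-- `C v` is the length of `v` minus the sum of its entries. -/
def C (v : List ℕ) : ℤ := (v.length : ℤ) - (v.sum : ℤ)

/-- A list of natural numbers is a well-formed expression (Polish notation
encoding of an ordered rooted tree by outdegrees) if it is of the form
`d :: (w₁ ++ ⋯ ++ w_d)` where each `wᵢ` is a well-formed expression. -/
inductive IsWF : List ℕ → Prop
  | node (d : ℕ) (ws : List (List ℕ)) (hlen : ws.length = d)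
      (h : ∀ w ∈ ws, IsWF w) : IsWF (d :: ws.flatten)

/-- The `k`-rotation of `s = u ++ v` with `v` of length `k` is `v ++ u`. -/
def krot (k : ℕ) (s : List ℕ) : List ℕ :=
  s.drop (s.length - k) ++ s.take (s.length - k)

lemma C_append (a b : List ℕ) : C (a ++ b) = C a + C b := by
  simp [C]; ring

lemma C_cons (d : ℕ) (t : List ℕ) : C (d :: t) = 1 - d + C t := by
  simp [C]; ring

lemma main_aux : ∀ n : ℕ, ∀ s : List ℕ, s.length ≤ n → 1 ≤ C s →
    ∃ p, p <+: s ∧ p ≠ [] ∧ IsWF p ∧ C p = 1 := by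
  intro n
  induction n with
  | zero =>
    intro s hlen hC
    have : s = [] := List.length_eq_zero_iff.mp (Nat.le_zero.mp hlen)
    subst this
    simp [C] at hC
  | succ n ih =>
    -- inner lemma
    have inner : ∀ k : ℕ, ∀ t : List ℕ, t.length ≤ n → (k : ℤ) ≤ C t →
        ∃ ws : List (List ℕ), ws.length = k ∧ (∀ w ∈ ws, IsWF w) ∧
          ws.flatten <+: t ∧ C ws.flatten = k := by
      intro k
      induction k with
      | zero =>
        intro t _ _
        exact ⟨[], by simp, by simp, by simp, by simp [C]⟩
      | succ k ihk =>
        intro t hlen hC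
        have h1 : 1 ≤ C t := le_trans (by push_cast; omega) hC
        obtain ⟨p, hpre, hpne, hwf, hCp⟩ := ih t hlen h1
        obtain ⟨r, hr⟩ := hpre
        have hCr : (k : ℤ) ≤ C r := by
          have := C_append p r
          rw [hr] at this
          rw [this, hCp] at hC
          push_cast at hC ⊢
          omega
        have hrlen : r.length ≤ n := by
          have : p.length + r.length = t.length := by
            rw [← hr]; simp
          have hp1 : 1 ≤ p.length := List.length_pos_iff.mpr hpne
          omega
        obtain ⟨ws, hwsl, hwswf, hwspre, hwsC⟩ := ihk r hrlen hCr
        refine ⟨p :: ws, by simp [hwsl], ?_, ?_, ?_⟩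
        · intro w hw
          rcases List.mem_cons.mp hw with h | h
          · exact h ▸ hwf
          · exact hwswf w h
        · rw [← hr]
          obtain ⟨q, hq⟩ := hwspre
          exact ⟨q, by rw [List.flatten_cons, List.append_assoc, hq]⟩
        · rw [List.flatten_cons, C_append, hCp, hwsC]
          push_cast; ring
    intro s hlen hC
    match s with
    | [] => simp [C] at hC
    | d :: t =>
      have hlt : t.length ≤ n := by simp at hlen; omega
      have hd : (d : ℤ) ≤ C t := by
        rw [C_cons] at hC; omega
      obtain ⟨ws, hwsl, hwswf, hwspre, hwsC⟩ := inner d t hlt hd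
      refine ⟨d :: ws.flatten, ?_, by simp, IsWF.node d ws hwsl hwswf, ?_⟩
      · obtain ⟨q, hq⟩ := hwspre
        exact ⟨q, by simp [hq]⟩
      · rw [C_cons, hwsC]; ring

theorem stmt_3 (s : List ℕ) (hs : s ≠ []) (hC : 1 ≤ C s) :
    ∃ p : List ℕ, p <+: s ∧ p ≠ [] ∧ IsWF p := by
  obtain ⟨p, h1, h2, h3, _⟩ := main_aux s.length s le_rfl hC
  exact ⟨p, h1, h2, h3⟩
end

section
/- Let w be a well-formed expression of length n. Then the n rotations of w (the k-rotations for k = 0, 1, …, n−1) are pairwise distinct lists; equivalently, no k-rotation of w with 0 < k < n is equal to w. -/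
lemma C_flatten_of_all_one (ws : List (List ℕ)) (h : ∀ w ∈ ws, C w = 1) :
    C ws.flatten = ws.length := by
  induction ws with
  | nil => simp [C]
  | cons a t ih =>
    have : C a = 1 := h a (by simp)
    simp only [List.flatten_cons, C_append, this, ih (fun w hw => h w (by simp [hw])),
      List.length_cons]
    push_cast; ring

lemma wf_C {w : List ℕ} (hw : IsWF w) : C w = 1 := by
  induction hw with
  | node d ws hlen h ih =>
    have := C_flatten_of_all_one ws ih
    simp [C] at this ⊢
    omega

/-- bound for strict prefixes of a flatten of good blocks -/
lemma flatten_prefix_bound (ws : List (List ℕ))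
    (h : ∀ w ∈ ws, C w = 1 ∧ ∀ r, r <+: w → r.length < w.length → C r ≤ 0) :
    ∀ q, q <+: ws.flatten → q.length < ws.flatten.length → C q ≤ (ws.length : ℤ) - 1 := by
  induction ws with
  | nil => intro q _ hlt; simp at hlt
  | cons a t ih =>
    intro q hq hlt
    simp only [List.flatten_cons] at hq hlt
    by_cases hle : q.length < a.length
    · -- q is a strict prefix of a
      have hqa : q <+: a := by
        refine List.prefix_of_prefix_length_le hq (List.prefix_append a t.flatten) hle.le
      have := (h a (by simp)).2 q hqa hle
      simp only [List.length_cons]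
      push_cast
      omega
    · push_neg at hle
      have haq : a <+: q :=
        List.prefix_of_prefix_length_le (List.prefix_append a t.flatten) hq hle
      obtain ⟨q', rfl⟩ := haq
      have hq' : q' <+: t.flatten := by
        obtain ⟨r, hr⟩ := hq
        rw [List.append_assoc] at hr
        exact ⟨r, (List.append_cancel_left hr)⟩
      have hlt' : q'.length < t.flatten.length := by
        simp [List.length_append] at hlt ⊢; omega
      have hCa : C a = 1 := (h a (by simp)).1
      have := ih (fun w hw => h w (by simp [hw])) q' hq' hlt'
      rw [C_append, hCa]
      simp only [List.length_cons]
      push_cast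
      omega

lemma wf_prefix {w : List ℕ} (hw : IsWF w) :
    ∀ p, p <+: w → p.length < w.length → C p ≤ 0 := by
  induction hw with
  | node d ws hlen h ih =>
    intro p hp hlt
    match p, hp with
    | [], _ => simp [C]
    | x :: q, hp =>
      have hx : x = d := by
        obtain ⟨r, hr⟩ := hp
        simpa using (congrArg (fun l => l.headI) hr.symm).symm
      subst hx
      have hq : q <+: ws.flatten := by
        obtain ⟨r, hr⟩ := hp
        exact ⟨r, by injection hr⟩
      have hqlt : q.length < ws.flatten.length := by simpa using hlt
      have hb := flatten_prefix_bound ws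
        (fun v hv => ⟨wf_C (h v hv), ih v hv⟩) q hq hqlt
      rw [hlen] at hb
      simp only [C, List.length_cons, List.sum_cons] at hb ⊢
      push_cast at hb ⊢
      omega

lemma wf_rotate_ne {w : List ℕ} (hw : IsWF w) {c : ℕ} (hc : 0 < c)
    (hcn : c < w.length) : w.rotate c ≠ w := by
  intro h
  rw [List.rotate_eq_drop_append_take hcn.le] at h
  set u := w.take c with hu
  set v := w.drop c with hv
  have hw_eq : u ++ v = w := List.take_append_drop c w
  have hulen : u.length = c := by simp [hu]; omega
  have hvlen : v.length = w.length - c := by simp [hv]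
  have hCu : C u ≤ 0 := wf_prefix hw u (hw_eq ▸ List.prefix_append u v) (by omega)
  have hCv : C v ≤ 0 := wf_prefix hw v (h ▸ List.prefix_append v u) (by omega)
  have : C w = C u + C v := by rw [← hw_eq, C_append]
  have := wf_C hw
  omega

theorem stmt_5 (w : List ℕ) (hw : IsWF w) :
    (∀ j k : ℕ, j < w.length → k < w.length → krot j w = krot k w → j = k) ∧
    (∀ k : ℕ, 0 < k → k < w.length → krot k w ≠ w) := by
  set n := w.length with hn
  have hkrot : ∀ k, k ≤ n → krot k w = w.rotate (n - k) := by
    intro k hk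
    rw [krot, List.rotate_eq_drop_append_take (by omega)]
  have key : ∀ a b : ℕ, 0 < a → a < b → b ≤ n → w.rotate a = w.rotate b → False := by
    intro a b ha0 hab hbn hrot
    have hrr : (w.rotate a).rotate (b - a) = w.rotate a := by
      rw [List.rotate_rotate]
      rw [show a + (b - a) = b by omega, ← hrot]
    have h2 : w.rotate (b - a) = w := by
      have := congrArg (fun l => l.rotate (n - a)) hrr
      simp only [List.rotate_rotate] at this
      rw [show a + (b - a) + (n - a) = n + (b - a) by omega,
        show a + (n - a) = n by omega] at this
      rw [← List.rotate_rotate, hn, List.rotate_length] at this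
      exact this
    exact wf_rotate_ne hw (by omega) (by omega) h2
  constructor
  · intro j k hj hk heq
    rw [hkrot j hj.le, hkrot k hk.le] at heq
    rcases lt_trichotomy j k with h | h | h
    · exact absurd heq.symm (fun hh => key (n - k) (n - j) (by omega) (by omega) (by omega) hh)
    · exact h
    · exact absurd heq (fun hh => key (n - j) (n - k) (by omega) (by omega) (by omega) hh)
  · intro k hk0 hkn h
    rw [hkrot k hkn.le] at h
    exact wf_rotate_ne hw (by omega) (by omega) h
end

section
/- Let m be a multiset of natural numbers of cardinality n ≥ 1 with (card m) − (sum of the entries of m) = 1, and let e be a well-formed expression whose underlying multiset is m. Then the number of lists s with underlying multiset m such that some rotation of s equals e is exactly n. -/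
lemma C_nil : C [] = 0 := by simp [C]

/-- prefix bound for flattens of lists of good lists -/
lemma flat_bound (ws : List (List ℕ))
    (H : ∀ w ∈ ws, C w = 1 ∧ ∀ p, p <+: w → p.length < w.length → C p ≤ 0) :
    C ws.flatten = ws.length ∧
      ∀ p, p <+: ws.flatten → p.length < ws.flatten.length →
        C p + 1 ≤ ws.length := by
  induction ws with
  | nil =>
    refine ⟨by simp [C_nil], fun p hp hlen => ?_⟩
    simp at hlen
  | cons w rest ih =>
    obtain ⟨hw1, hw2⟩ := H w (by simp)
    obtain ⟨ih1, ih2⟩ := ih (fun x hx => H x (by simp [hx]))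
    have hflat : (w :: rest).flatten = w ++ rest.flatten := by simp
    constructor
    · rw [hflat, C_append, hw1, ih1]; simp only [List.length_cons]; push_cast; ring
    · intro p hp hlen
      rw [hflat] at hp hlen
      rcases le_or_gt p.length w.length with hle | hlt
      · have hpw : p <+: w := List.prefix_of_prefix_length_le hp (w.prefix_append rest.flatten) hle
        rcases eq_or_lt_of_le hle with heq | hlt'
        · have : p = w := List.IsPrefix.eq_of_length hpw heq
          subst this
          simp only [List.length_append] at hlen
          have hrest : 0 < rest.flatten.length := by omega
          have : 1 ≤ (rest.length : ℤ) := by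
            by_contra h
            have : rest.length = 0 := by omega
            have : rest = [] := List.length_eq_zero_iff.mp this
            simp [this] at hrest
          rw [hw1]
          simp only [List.length_cons]
          push_cast
          omega
        · have := hw2 p hpw hlt'
          have hr : (0:ℤ) ≤ rest.length := by positivity
          simp only [List.length_cons]
          push_cast
          omega
      · -- p = w ++ q
        have hwp : w <+: p := List.prefix_of_prefix_length_le (w.prefix_append rest.flatten) hp hlt.le
        obtain ⟨q, rfl⟩ := hwp
        have hq : q <+: rest.flatten := by
          obtain ⟨r, hr⟩ := hp
          refine ⟨r, ?_⟩
          rw [List.append_assoc] at hr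
          exact List.append_cancel_left hr
        have hqlen : q.length < rest.flatten.length := by
          simp only [List.length_append] at hlen; omega
        have := ih2 q hq hqlen
        rw [C_append, hw1]
        simp only [List.length_cons]
        push_cast
        omega

/-- A well-formed expression has `C = 1` and every proper prefix has `C ≤ 0`. -/
lemma wf_C_s10 {w : List ℕ} (h : IsWF w) :
    C w = 1 ∧ ∀ p, p <+: w → p.length < w.length → C p ≤ 0 := by
  induction h with
  | node d ws hlen hws ih =>
    obtain ⟨h1, h2⟩ := flat_bound ws ih
    constructor
    · show C (d :: ws.flatten) = 1
      have : (d :: ws.flatten) = [d] ++ ws.flatten := by simp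
      rw [this, C_append, h1, hlen]
      simp [C]
    · intro p hp hplen
      match p, hp with
      | [], _ => simp [C_nil]
      | (a :: p'), hp =>
        obtain ⟨rfl, hp'⟩ := List.cons_prefix_cons.mp hp
        have hp'len : p'.length < ws.flatten.length := by
          simp only [List.length_cons] at hplen; omega
        have h3 := h2 p' hp' hp'len
        have : (a :: p') = [a] ++ p' := by simp
        rw [this, C_append]
        have hCa : C [a] = 1 - (a : ℤ) := by simp [C]
        rw [hCa]
        rw [hlen] at h3
        omega

theorem stmt_10 (m : Multiset ℕ) (n : ℕ) (hn : Multiset.card m = n) (hn1 : 1 ≤ n)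
    (hC : (Multiset.card m : ℤ) - (m.sum : ℤ) = 1)
    (e : List ℕ) (he : (↑e : Multiset ℕ) = m) (hwf : IsWF e) :
    {s : List ℕ | (↑s : Multiset ℕ) = m ∧ ∃ k ≤ s.length, krot k s = e}.ncard = n := by
  have hlen_e : e.length = n := by
    rw [← hn, ← he, Multiset.coe_card]
  -- no nontrivial rotation of e equals e
  have key : ∀ t, 0 < t → t < n → e.rotate t ≠ e := by
    intro t ht htn heq
    obtain ⟨h1, h2⟩ := wf_C_s10 hwf
    have hte : t ≤ e.length := by omega
    rw [List.rotate_eq_drop_append_take hte] at heq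
    have hpre_drop : e.drop t <+: e := ⟨e.take t, heq⟩
    have hpre_take : e.take t <+: e := e.take_prefix t
    have c1 := h2 _ hpre_drop (by simp [hlen_e]; omega)
    have c2 := h2 _ hpre_take (by simp [hlen_e]; omega)
    have hsum : C (e.take t) + C (e.drop t) = 1 := by
      rw [← C_append, List.take_append_drop, h1]
    omega
  have hrot_fix : ∀ (s : List ℕ), s.length = n → s.rotate n = s := by
    intro s hs; rw [← hs, List.rotate_length]
  have hset : {s : List ℕ | (↑s : Multiset ℕ) = m ∧ ∃ k ≤ s.length, krot k s = e}
      = (fun k => e.rotate k) '' Set.Iio n := by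
    ext s
    simp only [Set.mem_setOf_eq, Set.mem_image, Set.mem_Iio]
    constructor
    · rintro ⟨hsm, k, hk, hks⟩
      have hslen : s.length = n := by rw [← hn, ← hsm, Multiset.coe_card]
      have hkr : krot k s = s.rotate (s.length - k) := by
        rw [List.rotate_eq_drop_append_take (Nat.sub_le _ _)]; rfl
      rw [hkr, hslen] at hks
      set j := n - k with hj
      have hjn : j ≤ n := Nat.sub_le _ _
      by_cases hj0 : j = 0
      · rw [hj0, List.rotate_zero] at hks
        exact ⟨0, hn1, by rw [List.rotate_zero, hks]⟩
      · by_cases hjn' : j = n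
        · rw [hjn'] at hks
          rw [hrot_fix s hslen] at hks
          exact ⟨0, hn1, by rw [List.rotate_zero, hks]⟩
        · refine ⟨n - j, by omega, ?_⟩
          rw [← hks, List.rotate_rotate]
          have : j + (n - j) = n := by omega
          rw [this, hrot_fix s hslen]
    · rintro ⟨k, hk, rfl⟩
      have hperm : List.Perm (e.rotate k) e := List.rotate_perm e k
      refine ⟨by rw [← he]; exact Multiset.coe_eq_coe.mpr hperm, k, ?_, ?_⟩
      · rw [List.length_rotate, hlen_e]; omega
      · have hslen : (e.rotate k).length = n := by rw [List.length_rotate, hlen_e]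
        have hkr : krot k (e.rotate k) = (e.rotate k).rotate ((e.rotate k).length - k) := by
          rw [List.rotate_eq_drop_append_take (Nat.sub_le _ _)]; rfl
        rw [hkr, hslen, List.rotate_rotate]
        have : k + (n - k) = n := by omega
        rw [this, ← hlen_e, List.rotate_length]
  rw [hset]
  have aux : ∀ i j : ℕ, i < n → j < n → i < j → e.rotate i = e.rotate j → False := by
    intro i j hi hj hlt hij
    have h1 : e.rotate (i + (n - i)) = e.rotate (j + (n - i)) := by
      rw [← List.rotate_rotate, ← List.rotate_rotate, hij]
    have hi' : i + (n - i) = n := by omega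
    have hj' : j + (n - i) = (j - i) + n := by omega
    rw [hi', hj', ← List.rotate_rotate, hrot_fix e hlen_e,
      hrot_fix (e.rotate (j - i)) (by rw [List.length_rotate, hlen_e])] at h1
    exact key (j - i) (by omega) (by omega) h1.symm
  have hinj : Set.InjOn (fun k => e.rotate k) (Set.Iio n) := by
    intro i hi j hj hij
    simp only [Set.mem_Iio] at hi hj
    simp only at hij
    rcases lt_trichotomy i j with h | h | h
    · exact absurd (aux i j hi hj h hij) (by simp)
    · exact h
    · exact absurd (aux j i hj hi h hij.symm) (by simp)
  rw [Set.ncard_image_of_injOn hinj, ← Finset.coe_Iio, Set.ncard_coe_finset, Nat.card_Iio]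
end

section
/- For every natural number n, the number of well-formed expressions whose underlying multiset consists of exactly n copies of 2 and n+1 copies of 0 equals (2n)! / (n! · (n+1)!), the n-th Catalan number. -/
/-!
Reading a binary tree in preorder and writing each vertex's outdegree (`2` for an internal
node, `0` for a leaf) gives a bijection from binary trees with `n` internal nodes onto the
well-formed expressions over `{0, 2}` with `n` twos and `n + 1` zeros: it is injective because
well-formed expressions are prefix-free (unique readability), and surjective by decomposing a
well-formed expression along its defining rule. Binary trees with `n` internal nodes are counted
by the Catalan number.
-/

def polish : BinaryTree Unit → List ℕ
  | .nil => [0]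
  | .node _ l r => 2 :: (polish l ++ polish r)

theorem polish_append_inj : ∀ {t₁ t₂ : BinaryTree Unit} {l₁ l₂ : List ℕ},
    polish t₁ ++ l₁ = polish t₂ ++ l₂ → t₁ = t₂ ∧ l₁ = l₂
  | .nil, .nil, _, _, h => ⟨rfl, by simpa [polish] using h⟩
  | .nil, .node _ _ _, _, _, h => by simp [polish] at h
  | .node _ _ _, .nil, _, _, h => by simp [polish] at h
  | .node () l r, .node () l' r', _, _, h => by
    simp only [polish, List.cons_append, List.cons.injEq, List.append_assoc, true_and] at h
    obtain ⟨rfl, hr⟩ := polish_append_inj h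
    obtain ⟨rfl, rfl⟩ := polish_append_inj hr
    exact ⟨rfl, rfl⟩

theorem polish_injective : Function.Injective polish := fun _ _ h =>
  (polish_append_inj (l₁ := []) (l₂ := []) (by simpa using h)).1

theorem isWF_polish (t : BinaryTree Unit) : IsWF (polish t) := by
  induction t with
  | nil => exact IsWF.node 0 [] rfl (by simp)
  | node _ l r ihl ihr =>
    have hflat : polish (.node () l r) = 2 :: [polish l, polish r].flatten := by simp [polish]
    rw [hflat]
    exact IsWF.node 2 _ rfl (by simp [ihl, ihr])

theorem coe_polish (t : BinaryTree Unit) :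
    (polish t : Multiset ℕ)
      = Multiset.replicate t.numNodes 2 + Multiset.replicate t.numLeaves 0 := by
  induction t with
  | nil => simp [polish, BinaryTree.numNodes, BinaryTree.numLeaves]
  | node _ l r ihl ihr =>
    have hcons : (polish (.node () l r) : Multiset ℕ)
        = 2 ::ₘ ((polish l : Multiset ℕ) + (polish r : Multiset ℕ)) := by simp [polish]
    rw [hcons, ihl, ihr]
    simp only [BinaryTree.numNodes, BinaryTree.numLeaves, Multiset.replicate_add,
      Multiset.replicate_succ, ← Multiset.singleton_add]
    abel

theorem numNodes_eq_of_coe_polish_eq {t : BinaryTree Unit} {n m : ℕ}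
    (h : (polish t : Multiset ℕ) = Multiset.replicate n 2 + Multiset.replicate m 0) :
    t.numNodes = n := by
  have hcount := congrArg (Multiset.count 2) ((coe_polish t).symm.trans h)
  simpa [Multiset.count_replicate] using hcount

theorem exists_polish_eq_of_isWF {w : List ℕ} (hw : IsWF w) (h02 : ∀ x ∈ w, x = 0 ∨ x = 2) :
    ∃ t : BinaryTree Unit, polish t = w := by
  induction hw with
  | node d ws hlen _ ih =>
    rcases h02 d List.mem_cons_self with rfl | rfl
    · obtain rfl : ws = [] := List.length_eq_zero_iff.mp hlen
      exact ⟨.nil, rfl⟩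
    · match ws, hlen with
      | [w₁, w₂], _ =>
        obtain ⟨t₁, rfl⟩ := ih w₁ (by simp) (fun x hx => h02 x (by simp [hx]))
        obtain ⟨t₂, rfl⟩ := ih w₂ (by simp) (fun x hx => h02 x (by simp [hx]))
        exact ⟨.node () t₁ t₂, by simp [polish]⟩

theorem setOf_isWF_eq_image_polish (n : ℕ) :
    {w : List ℕ | (w : Multiset ℕ)
        = Multiset.replicate n 2 + Multiset.replicate (n + 1) 0 ∧ IsWF w}
      = ((BinaryTree.treesOfNumNodesEq n).image polish : Set (List ℕ)) := by
  ext w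
  simp only [Set.mem_ofPred_eq, Finset.coe_image, Set.mem_image, Finset.mem_coe,
    BinaryTree.mem_treesOfNumNodesEq]
  constructor
  · rintro ⟨hm, hwf⟩
    have h02 : ∀ x ∈ w, x = 0 ∨ x = 2 := fun x hx => by
      have hx' : x ∈ (w : Multiset ℕ) := hx
      rw [hm, Multiset.mem_add] at hx'
      exact hx'.symm.imp Multiset.eq_of_mem_replicate Multiset.eq_of_mem_replicate
    obtain ⟨t, rfl⟩ := exists_polish_eq_of_isWF hwf h02
    exact ⟨t, numNodes_eq_of_coe_polish_eq hm, rfl⟩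
  · rintro ⟨t, rfl, rfl⟩
    refine ⟨?_, isWF_polish t⟩
    rw [coe_polish, BinaryTree.numLeaves_eq_numNodes_succ]

theorem catalan_eq_factorial_div (n : ℕ) :
    catalan n = (2 * n).factorial / (n.factorial * (n + 1).factorial) := by
  rw [catalan_eq_centralBinom_div, Nat.centralBinom_eq_two_mul_choose,
    Nat.choose_eq_factorial_div_factorial (by omega), show 2 * n - n = n by omega,
    Nat.div_div_eq_div_mul, Nat.factorial_succ]
  ring_nf

theorem stmt_13 (n : ℕ) :
    {w : List ℕ | (↑w : Multiset ℕ)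
        = Multiset.replicate n 2 + Multiset.replicate (n + 1) 0 ∧ IsWF w}.ncard
      = (2 * n).factorial / (n.factorial * (n + 1).factorial) := by
  rw [setOf_isWF_eq_image_polish, Set.ncard_coe_finset,
    Finset.card_image_of_injective _ polish_injective,
    BinaryTree.treesOfNumNodesEq_card_eq_catalan, catalan_eq_factorial_div]
end
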